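/- If G is a finite graph without isolated vertices and u, v are distinct false twins of G (i.e., N(u) = N(v) and u ≠ v), then γ_tg(G) = γ_tg(G − v), where G − v denotes the subgraph of G induced on V(G) \ {v}. -/

import Mathlib

open Finset

open scoped Classical

noncomputable section

namespace ZGamePaper

variable {V : Type*} {W : Type*}

/-- The closed neighborhood `N[v]` of a vertex as a `Finset`. -/
def closedNF [Fintype V] (G : SimpleGraph V) (v : V) : Finset V :=
  Finset.univ.filter fun x => x = v ∨ G.Adj v x

/-- The open neighborhood `N(v)` of a vertex as a `Finset`. -/
def openNF [Fintype V] (G : SimpleGraph V) (v : V) : Finset V :=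
  Finset.univ.filter fun x => G.Adj v x

lemma openNF_subset_closedNF [Fintype V] (G : SimpleGraph V) (v : V) :
    openNF G v ⊆ closedNF G v := by
  intro x hx
  simp only [openNF, closedNF, mem_filter] at hx ⊢
  exact ⟨hx.1, Or.inr hx.2⟩

lemma measure_dec [Fintype V] {A C : Finset V} {w : V} (hw : w ∈ C) (hwA : w ∉ A) :
    (Finset.univ \ (A ∪ C)).card < (Finset.univ \ A).card := by
  apply Finset.card_lt_card
  rw [Finset.ssubset_iff_of_subset
    (Finset.sdiff_subset_sdiff (le_refl _) Finset.subset_union_left)]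
  refine ⟨w, ?_, ?_⟩
  · simp [hwA]
  · simp [hw]

/-! ### The Z-domination game -/

/-- The set of legal moves in the Z-domination game, given the set `A` of
already dominated vertices: a vertex `v` is legal if `N(v) ⊄ A`. -/
def zLegal [Fintype V] (G : SimpleGraph V) (A : Finset V) : Finset V :=
  Finset.univ.filter fun v => ¬ openNF G v ⊆ A

lemma zLegal_dec [Fintype V] (G : SimpleGraph V) (A : Finset V) {v : V}
    (hv : v ∈ zLegal G A) :
    (Finset.univ \ (A ∪ closedNF G v)).card < (Finset.univ \ A).card := by
  simp only [zLegal, mem_filter] at hv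
  obtain ⟨w, hw1, hw2⟩ := Finset.not_subset.mp hv.2
  exact measure_dec (openNF_subset_closedNF G v hw1) hw2

/-- The optimal number of remaining moves in the Z-domination game played on `G`,
where `A` is the set of already dominated vertices and `turn = true` iff it is
Dominator's (the minimizer's) turn. -/
def zVal [Fintype V] (G : SimpleGraph V) (turn : Bool) (A : Finset V) : ℕ :=
  if h : (zLegal G A).Nonempty then
    if turn then
      1 + ((zLegal G A).attach.inf' h.attach fun v => zVal G false (A ∪ closedNF G v.1))
    else
      1 + ((zLegal G A).attach.sup' h.attach fun v => zVal G true (A ∪ closedNF G v.1))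
  else 0
termination_by (Finset.univ \ A).card
decreasing_by
  · exact zLegal_dec G A v.2
  · exact zLegal_dec G A v.2

/-- The game Z-domination number `γ_Zg(G)` (Dominator starts). -/
def gammaZg [Fintype V] (G : SimpleGraph V) : ℕ := zVal G true ∅

/-- The Staller-start game Z-domination number `γ'_Zg(G)`. -/
def gammaZg' [Fintype V] (G : SimpleGraph V) : ℕ := zVal G false ∅

/-! ### The (ordinary) domination game -/

/-- The set of legal moves in the domination game: `v` is legal if `N[v] ⊄ A`.
This set is nonempty if and only if `A ≠ V(G)`. -/
def dLegal [Fintype V] (G : SimpleGraph V) (A : Finset V) : Finset V :=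
  Finset.univ.filter fun v => ¬ closedNF G v ⊆ A

lemma dLegal_dec [Fintype V] (G : SimpleGraph V) (A : Finset V) {v : V}
    (hv : v ∈ dLegal G A) :
    (Finset.univ \ (A ∪ closedNF G v)).card < (Finset.univ \ A).card := by
  simp only [dLegal, mem_filter] at hv
  obtain ⟨w, hw1, hw2⟩ := Finset.not_subset.mp hv.2
  exact measure_dec hw1 hw2

/-- The optimal number of remaining moves in the domination game on `G`, with `A`
the set of already dominated vertices; `turn = true` iff it is Dominator's turn.
(There is no legal move iff `A = V(G)`.) -/
def dVal [Fintype V] (G : SimpleGraph V) (turn : Bool) (A : Finset V) : ℕ :=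
  if h : (dLegal G A).Nonempty then
    if turn then
      1 + ((dLegal G A).attach.inf' h.attach fun v => dVal G false (A ∪ closedNF G v.1))
    else
      1 + ((dLegal G A).attach.sup' h.attach fun v => dVal G true (A ∪ closedNF G v.1))
  else 0
termination_by (Finset.univ \ A).card
decreasing_by
  · exact dLegal_dec G A v.2
  · exact dLegal_dec G A v.2

/-- The game domination number `γ_g(G)` (Dominator starts). -/
def gammaGg [Fintype V] (G : SimpleGraph V) : ℕ := dVal G true ∅

/-- The Staller-start game domination number `γ'_g(G)`. -/
def gammaGg' [Fintype V] (G : SimpleGraph V) : ℕ := dVal G false ∅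

/-! ### The total domination game -/

/-- The set of legal moves in the total domination game: `v` is legal if `N(v) ⊄ B`.
For a graph without isolated vertices this set is nonempty iff `B ≠ V(G)`. -/
def tLegal [Fintype V] (G : SimpleGraph V) (B : Finset V) : Finset V :=
  Finset.univ.filter fun v => ¬ openNF G v ⊆ B

lemma tLegal_dec [Fintype V] (G : SimpleGraph V) (B : Finset V) {v : V}
    (hv : v ∈ tLegal G B) :
    (Finset.univ \ (B ∪ openNF G v)).card < (Finset.univ \ B).card := by
  simp only [tLegal, mem_filter] at hv
  obtain ⟨w, hw1, hw2⟩ := Finset.not_subset.mp hv.2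
  exact measure_dec hw1 hw2

/-- The optimal number of remaining moves in the total domination game on `G`,
with `B` the set of already totally dominated vertices; `turn = true` iff it is
Dominator's turn. -/
def tVal [Fintype V] (G : SimpleGraph V) (turn : Bool) (B : Finset V) : ℕ :=
  if h : (tLegal G B).Nonempty then
    if turn then
      1 + ((tLegal G B).attach.inf' h.attach fun v => tVal G false (B ∪ openNF G v.1))
    else
      1 + ((tLegal G B).attach.sup' h.attach fun v => tVal G true (B ∪ openNF G v.1))
  else 0
termination_by (Finset.univ \ B).card
decreasing_by
  · exact tLegal_dec G B v.2
  · exact tLegal_dec G B v.2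

/-- The game total domination number `γ_tg(G)` (Dominator starts). -/
def gammaTg [Fintype V] (G : SimpleGraph V) : ℕ := tVal G true ∅

/-! ### The L-domination game -/

/-- The set of legal moves in the L-domination game, given the set `P` of vertices
played so far: `v` is legal if `v ∉ P` and `N[v] ⊄ N(P)`. -/
def lLegal [Fintype V] (G : SimpleGraph V) (P : Finset V) : Finset V :=
  Finset.univ.filter fun v => v ∉ P ∧ ¬ closedNF G v ⊆ P.biUnion (openNF G)

lemma lLegal_dec [Fintype V] (G : SimpleGraph V) (P : Finset V) {v : V}
    (hv : v ∈ lLegal G P) :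
    (Finset.univ \ insert v P).card < (Finset.univ \ P).card := by
  simp only [lLegal, mem_filter] at hv
  apply Finset.card_lt_card
  rw [Finset.ssubset_iff_of_subset
    (Finset.sdiff_subset_sdiff (le_refl _) (Finset.subset_insert _ _))]
  exact ⟨v, by simp [hv.2.1], by simp⟩

/-- The optimal number of remaining moves in the L-domination game on `G`, with `P`
the set of vertices played so far; `turn = true` iff it is Dominator's turn. -/
def lVal [Fintype V] (G : SimpleGraph V) (turn : Bool) (P : Finset V) : ℕ :=
  if h : (lLegal G P).Nonempty then
    if turn then
      1 + ((lLegal G P).attach.inf' h.attach fun v => lVal G false (insert v.1 P))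
    else
      1 + ((lLegal G P).attach.sup' h.attach fun v => lVal G true (insert v.1 P))
  else 0
termination_by (Finset.univ \ P).card
decreasing_by
  · exact lLegal_dec G P v.2
  · exact lLegal_dec G P v.2

/-- The game L-domination number `γ_Lg(G)` (Dominator starts). -/
def gammaLg [Fintype V] (G : SimpleGraph V) : ℕ := lVal G true ∅

/-! ### Domination number and related notions -/

/-- The domination number `γ(G)`: the minimum size of a set `S` with `N[S] = V(G)`. -/
def gammaNum [Fintype V] (G : SimpleGraph V) : ℕ :=
  sInf {k | ∃ S : Finset V, S.card = k ∧ ∀ v : V, ∃ u ∈ S, v ∈ closedNF G u}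

/-- The partially dominated graph `G|A` has a Z-configuration if there is an
undominated vertex `v` all of whose neighbors are dominated, while every neighbor
of `v` has at least two undominated neighbors. -/
def HasZConfig [Fintype V] (G : SimpleGraph V) (A : Finset V) : Prop :=
  ∃ v : V, v ∉ A ∧ openNF G v ⊆ A ∧ ∀ u ∈ openNF G v, 2 ≤ (openNF G u \ A).card

/-- A graph without isolated vertices is Z-insensitive if for every `D ⊆ V(G)` the
partially dominated graph `G|N[D]` has no Z-configuration. -/
def ZInsensitive [Fintype V] (G : SimpleGraph V) : Prop :=
  (∀ v : V, ∃ u : V, G.Adj v u) ∧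
    ∀ D : Finset V, ¬ HasZConfig G (D.biUnion (closedNF G))

/-- A vertex `w` is the center of a claw if it has three pairwise non-adjacent
neighbors. -/
def IsClawCenter (G : SimpleGraph V) (w : V) : Prop :=
  ∃ a b c : V, G.Adj w a ∧ G.Adj w b ∧ G.Adj w c ∧ a ≠ b ∧ a ≠ c ∧ b ≠ c ∧
    ¬ G.Adj a b ∧ ¬ G.Adj a c ∧ ¬ G.Adj b c

/-- A graph is weakly claw-free if every vertex has a neighbor that is not the
center of a claw. -/
def WeaklyClawFree (G : SimpleGraph V) : Prop :=
  ∀ v : V, ∃ u : V, G.Adj v u ∧ ¬ IsClawCenter G u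

/-- The lexicographic product `G ∘ H`. -/
def lexProd (G : SimpleGraph V) (H : SimpleGraph W) : SimpleGraph (V × W) where
  Adj p q := G.Adj p.1 q.1 ∨ (p.1 = q.1 ∧ H.Adj p.2 q.2)
  symm := by
    constructor
    rintro p q (h | ⟨h1, h2⟩)
    · exact Or.inl h.symm
    · exact Or.inr ⟨h1.symm, h2.symm⟩
  loopless := by
    constructor
    rintro p (h | ⟨_, h⟩)
    · exact G.loopless.irrefl _ h
    · exact H.loopless.irrefl _ h

/-!
Playing `v` has the same effect as playing its twin `u`, and a position in which `u` and `v` are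
either both totally dominated or both not is determined by its trace on `V ∖ {v}`. So the relation
"`B` does not separate `u` from `v`, and `B'` is the trace of `B`" is a bisimulation between the
total domination games on `G` and on `G - v`, and bisimilar positions have the same game value.
-/

lemma _root_.Finset.sup'_eq_sup'_of_forall_exists {α β γ : Type*} [SemilatticeSup γ]
    {s : Finset α} {t : Finset β} (hs : s.Nonempty) (ht : t.Nonempty) {f : α → γ} {g : β → γ}
    (hst : ∀ a ∈ s, ∃ b ∈ t, f a = g b) (hts : ∀ b ∈ t, ∃ a ∈ s, f a = g b) :
    s.sup' hs f = t.sup' ht g := by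
  apply le_antisymm
  · refine Finset.sup'_le hs f fun a ha => ?_
    obtain ⟨b, hb, hab⟩ := hst a ha
    exact Finset.le_sup'_of_le g hb hab.le
  · refine Finset.sup'_le ht g fun b hb => ?_
    obtain ⟨a, ha, hab⟩ := hts b hb
    exact Finset.le_sup'_of_le f ha hab.ge

lemma _root_.Finset.inf'_eq_inf'_of_forall_exists {α β γ : Type*} [SemilatticeInf γ]
    {s : Finset α} {t : Finset β} (hs : s.Nonempty) (ht : t.Nonempty) {f : α → γ} {g : β → γ}
    (hst : ∀ a ∈ s, ∃ b ∈ t, f a = g b) (hts : ∀ b ∈ t, ∃ a ∈ s, f a = g b) :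
    s.inf' hs f = t.inf' ht g :=
  Finset.sup'_eq_sup'_of_forall_exists (γ := γᵒᵈ) hs ht hst hts

@[simp]
lemma mem_openNF [Fintype V] {G : SimpleGraph V} {w x : V} : x ∈ openNF G w ↔ G.Adj w x := by
  simp [openNF]

def IsTBisimulation [Fintype V] [Fintype W] (G : SimpleGraph V) (G' : SimpleGraph W)
    (R : Finset V → Finset W → Prop) : Prop :=
  (∀ B B', R B B' → ∀ w ∈ tLegal G B, ∃ w' ∈ tLegal G' B',
      R (B ∪ openNF G w) (B' ∪ openNF G' w')) ∧
    ∀ B B', R B B' → ∀ w' ∈ tLegal G' B', ∃ w ∈ tLegal G B,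
      R (B ∪ openNF G w) (B' ∪ openNF G' w')

theorem IsTBisimulation.tVal_eq [Fintype V] [Fintype W] {G : SimpleGraph V}
    {G' : SimpleGraph W} {R : Finset V → Finset W → Prop} (hR : IsTBisimulation G G' R)
    (t : Bool) {B : Finset V} {B' : Finset W} (hBB' : R B B') :
    tVal G t B = tVal G' t B' := by
  induction hn : (univ \ B).card using Nat.strong_induction_on generalizing t B B' with
  | _ n ih =>
    have matched_values : ∀ b : Bool,
        (∀ w ∈ (tLegal G B).attach, ∃ w' ∈ (tLegal G' B').attach,
          tVal G b (B ∪ openNF G w.1) = tVal G' b (B' ∪ openNF G' w'.1)) ∧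
        (∀ w' ∈ (tLegal G' B').attach, ∃ w ∈ (tLegal G B).attach,
          tVal G b (B ∪ openNF G w.1) = tVal G' b (B' ∪ openNF G' w'.1)) := by
      refine fun b => ⟨fun ⟨w, hw⟩ _ => ?_, fun ⟨w', hw'⟩ _ => ?_⟩
      · obtain ⟨w', hw', hR'⟩ := hR.1 B B' hBB' w hw
        exact ⟨⟨w', hw'⟩, mem_attach _ _, ih _ (hn ▸ tLegal_dec G B hw) b hR' rfl⟩
      · obtain ⟨w, hw, hR'⟩ := hR.2 B B' hBB' w' hw'
        exact ⟨⟨w, hw⟩, mem_attach _ _, ih _ (hn ▸ tLegal_dec G B hw) b hR' rfl⟩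
    have legal_nonempty_iff : (tLegal G B).Nonempty ↔ (tLegal G' B').Nonempty := by
      constructor
      · rintro ⟨w, hw⟩
        obtain ⟨w', hw', -⟩ := hR.1 B B' hBB' w hw
        exact ⟨w', hw'⟩
      · rintro ⟨w', hw'⟩
        obtain ⟨w, hw, -⟩ := hR.2 B B' hBB' w' hw'
        exact ⟨w, hw⟩
    rw [tVal, tVal]
    by_cases h : (tLegal G B).Nonempty
    · rw [dif_pos h, dif_pos (legal_nonempty_iff.mp h)]
      cases t
      · exact congrArg (1 + ·) (Finset.sup'_eq_sup'_of_forall_exists _ _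
          (matched_values true).1 (matched_values true).2)
      · exact congrArg (1 + ·) (Finset.inf'_eq_inf'_of_forall_exists _ _
          (matched_values false).1 (matched_values false).2)
    · rw [dif_neg h, dif_neg (mt legal_nonempty_iff.mpr h)]

section FalseTwins

variable [Fintype V] {G : SimpleGraph V} {u v : V}

lemma adj_iff_adj_of_openNF_eq (htwin : openNF G u = openNF G v) (w : V) :
    G.Adj w u ↔ G.Adj w v := by
  rw [G.adj_comm, G.adj_comm w v, ← mem_openNF, ← mem_openNF, htwin]

def IsTwinTrace (u v : V) (B : Finset V) (B' : Finset {x : V | x ≠ v}) : Prop :=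
  (v ∈ B ↔ u ∈ B) ∧ ∀ x, x ∈ B' ↔ ↑x ∈ B

lemma IsTwinTrace.mem_tLegal_induce_iff (huv : u ≠ v) (htwin : openNF G u = openNF G v)
    {B : Finset V} {B' : Finset {x : V | x ≠ v}} (hB : IsTwinTrace u v B B')
    (w : {x : V | x ≠ v}) : w ∈ tLegal (G.induce {x | x ≠ v}) B' ↔ ↑w ∈ tLegal G B := by
  simp only [tLegal, mem_filter, mem_univ, true_and, subset_iff, mem_openNF,
    SimpleGraph.comap_adj, Function.Embedding.coe_subtype, hB.2]
  refine not_congr ⟨fun h x hx => ?_, fun h x hx => h hx⟩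
  by_cases hxv : x = v
  · rw [hxv, ← adj_iff_adj_of_openNF_eq htwin] at hx
    exact hxv ▸ hB.1.mpr (h (x := ⟨u, huv⟩) hx)
  · exact h (x := ⟨x, hxv⟩) hx

lemma IsTwinTrace.union_openNF (htwin : openNF G u = openNF G v) {B : Finset V}
    {B' : Finset {x : V | x ≠ v}} (hB : IsTwinTrace u v B B') (w : {x : V | x ≠ v}) :
    IsTwinTrace u v (B ∪ openNF G w) (B' ∪ openNF (G.induce {x | x ≠ v}) w) := by
  refine ⟨?_, fun x => ?_⟩
  · simp only [mem_union, mem_openNF, hB.1, adj_iff_adj_of_openNF_eq htwin]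
  · simp only [mem_union, mem_openNF, hB.2, SimpleGraph.comap_adj,
      Function.Embedding.coe_subtype]

theorem isTBisimulation_isTwinTrace (huv : u ≠ v) (htwin : openNF G u = openNF G v) :
    IsTBisimulation G (G.induce {x | x ≠ v}) (IsTwinTrace u v) := by
  -- `convert` reconciles the classical and the subtype `DecidableEq` instances in `B' ∪ _`.
  refine ⟨fun B B' hB w hw => ?_, fun B B' hB w' hw' => ?_⟩
  · by_cases hwv : w = v
    · have hu : u ∈ tLegal G B := by simpa [tLegal, hwv, htwin] using hw
      refine ⟨⟨u, huv⟩, (hB.mem_tLegal_induce_iff huv htwin _).mpr hu, ?_⟩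
      rw [hwv, ← htwin]
      convert hB.union_openNF htwin ⟨u, huv⟩
    · refine ⟨⟨w, hwv⟩, (hB.mem_tLegal_induce_iff huv htwin _).mpr hw, ?_⟩
      convert hB.union_openNF htwin ⟨w, hwv⟩
  · refine ⟨w', (hB.mem_tLegal_induce_iff huv htwin w').mp hw', ?_⟩
    convert hB.union_openNF htwin w'

end FalseTwins

theorem gammaTg_deleteFalseTwin_general {V : Type*} [Fintype V] (G : SimpleGraph V)
    (u v : V) (huv : u ≠ v)
    (htwin : openNF G u = openNF G v) :
    gammaTg G = gammaTg (G.induce {x : V | x ≠ v}) :=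
  (isTBisimulation_isTwinTrace huv htwin).tVal_eq true ⟨by simp, by simp⟩

/-- If `G` has no isolated vertices and `u ≠ v` are false twins of
`G`, then `γ_tg(G) = γ_tg(G - v)`. -/
theorem gammaTg_deleteFalseTwin {V : Type*} [Fintype V] (G : SimpleGraph V)
    (hiso : ∀ x : V, ∃ y : V, G.Adj x y) (u v : V) (huv : u ≠ v)
    (htwin : openNF G u = openNF G v) :
    gammaTg G = gammaTg (G.induce {x : V | x ≠ v}) :=
  gammaTg_deleteFalseTwin_general G u v huv htwin

end ZGamePaper
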